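/- (Céa lemma.) Suppose u ∈ V satisfies a(u, v) = f(v) for all v ∈ V, and u_W is a Galerkin solution on a finite-dimensional subspace W ⊆ V. Then ‖u − u_W‖_V ≤ (γ/α) ‖u − P_W u‖_V, where ‖u − P_W u‖_V = inf_{w ∈ W} ‖u − w‖_V. -/

import Mathlib

open scoped RealInnerProductSpace

/-- Orthogonal projection onto a submodule, as a plain function; it equals the usual
orthogonal projection whenever the submodule is finite-dimensional. -/
noncomputable def orthProj {V : Type*} [NormedAddCommGroup V] [InnerProductSpace ℝ V]
    (K : Submodule ℝ V) (x : V) : V := by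
  classical
  exact if h : FiniteDimensional ℝ K then
    haveI := h
    (K.orthogonalProjectionOnto x : V)
  else 0

/-! Galerkin orthogonality `a (u - u_W) w = 0` for `w ∈ W` turns coercivity into
`α ‖u - u_W‖² ≤ a (u - u_W) (u - u_W) = a (u - u_W) (u - w)`, and continuity bounds the right-hand
side by `γ ‖u - u_W‖ ‖u - w‖` for every `w ∈ W`; take `w = P_W u`. -/

section OrthProj

variable {V : Type*} [NormedAddCommGroup V] [InnerProductSpace ℝ V]
  (K : Submodule ℝ V) [FiniteDimensional ℝ K]

theorem orthProj_eq_starProjection (x : V) : orthProj K x = K.starProjection x := by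
  rw [orthProj, dif_pos ‹FiniteDimensional ℝ K›]
  rfl

theorem orthProj_mem (x : V) : orthProj K x ∈ K := by
  rw [orthProj_eq_starProjection]
  exact K.starProjection_apply_mem x

theorem norm_sub_orthProj_eq_iInf (x : V) : ‖x - orthProj K x‖ = ⨅ w : K, ‖x - (w : V)‖ := by
  rw [orthProj_eq_starProjection]
  exact Submodule.starProjection_minimal x

end OrthProj

section Galerkin

theorem galerkin_orthogonality {R E : Type*} [CommRing R] [AddCommGroup E] [Module R E]
    (a : E →ₗ[R] E →ₗ[R] R) (f : E →ₗ[R] R) (W : Submodule R E) {u uW : E}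
    (hu : ∀ w ∈ W, a u w = f w) (hGal : ∀ w ∈ W, a uW w = f w) :
    ∀ w ∈ W, a (u - uW) w = 0 := by
  intro w hw
  rw [map_sub, LinearMap.sub_apply, hu w hw, hGal w hw, sub_self]

variable {E : Type*} [SeminormedAddCommGroup E] [NormedSpace ℝ E]
  {a : E →ₗ[ℝ] E →ₗ[ℝ] ℝ} {α γ : ℝ}

theorem nonneg_mul_norm_of_abs_le (hcont : ∀ v w : E, |a v w| ≤ γ * ‖v‖ * ‖w‖) (v : E) :
    0 ≤ γ * ‖v‖ := by
  rcases (norm_nonneg v).eq_or_lt with hv | hv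
  · rw [← hv, mul_zero]
  · have : 0 ≤ γ * ‖v‖ * ‖v‖ := (abs_nonneg _).trans (hcont v v)
    exact nonneg_of_mul_nonneg_left this hv

theorem mul_norm_le_of_apply_self_eq (hcoer : ∀ v : E, α * ‖v‖ ^ 2 ≤ a v v)
    (hcont : ∀ v w : E, |a v w| ≤ γ * ‖v‖ * ‖w‖) {e x : E} (h : a e e = a e x) :
    α * ‖e‖ ≤ γ * ‖x‖ := by
  rcases (norm_nonneg e).eq_or_lt with he | he
  · rw [← he, mul_zero]
    exact nonneg_mul_norm_of_abs_le hcont x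
  · have : α * ‖e‖ * ‖e‖ ≤ γ * ‖x‖ * ‖e‖ :=
      calc α * ‖e‖ * ‖e‖ = α * ‖e‖ ^ 2 := by ring
        _ ≤ a e x := h ▸ hcoer e
        _ ≤ |a e x| := le_abs_self _
        _ ≤ γ * ‖e‖ * ‖x‖ := hcont e x
        _ = γ * ‖x‖ * ‖e‖ := by ring
    exact le_of_mul_le_mul_right this he

theorem norm_sub_le_of_galerkin_orthogonal (hα : 0 < α) (hcoer : ∀ v : E, α * ‖v‖ ^ 2 ≤ a v v)
    (hcont : ∀ v w : E, |a v w| ≤ γ * ‖v‖ * ‖w‖) {W : Submodule ℝ E} {u uW w : E}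
    (huW : uW ∈ W) (horth : ∀ w ∈ W, a (u - uW) w = 0) (hw : w ∈ W) :
    ‖u - uW‖ ≤ γ / α * ‖u - w‖ := by
  have hsplit : a (u - uW) (u - uW) = a (u - uW) (u - w) := by
    nth_rw 2 [← sub_add_sub_cancel u w uW]
    rw [map_add, horth _ (W.sub_mem hw huW), add_zero]
  rw [div_mul_eq_mul_div, le_div_iff₀ hα, mul_comm]
  exact mul_norm_le_of_apply_self_eq hcoer hcont hsplit

end Galerkin

/-- **Céa's lemma.** If `u` solves the continuous problem and `uW` is a Galerkin solution on a finite-dimensional subspace `W`, then `‖u - uW‖ ≤ (γ/α) ‖u - P_W u‖`, where `‖u - P_W u‖ = inf_{w ∈ W} ‖u - w‖`. -/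
theorem cea_lemma
    {V : Type*} [NormedAddCommGroup V] [InnerProductSpace ℝ V]
    (a : V →ₗ[ℝ] V →ₗ[ℝ] ℝ) (f : V →ₗ[ℝ] ℝ)
    (α γ : ℝ) (hα : 0 < α)
    (hcoer : ∀ v : V, α * ‖v‖ ^ 2 ≤ a v v)
    (hcont : ∀ v w : V, |a v w| ≤ γ * ‖v‖ * ‖w‖)
    (u : V) (hu : ∀ v : V, a u v = f v)
    (W : Submodule ℝ V) [FiniteDimensional ℝ ↥W]
    (uW : V) (huW : uW ∈ W) (hGal : ∀ w ∈ W, a uW w = f w) :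
    ‖u - uW‖ ≤ (γ / α) * ‖u - orthProj W u‖ ∧
      ‖u - orthProj W u‖ = ⨅ w : W, ‖u - (w : V)‖ := by
  have horth := galerkin_orthogonality a f W (fun w _ => hu w) hGal
  exact ⟨norm_sub_le_of_galerkin_orthogonal hα hcoer hcont huW horth (orthProj_mem W u),
    norm_sub_orthProj_eq_iInf W u⟩
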